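/- arXiv:2202.00853 — 3 statements merged into one kernel-verified Lean document; each statement's English description precedes it below -/
import Mathlib

section
/- Let f : [1,∞) → (0,∞) be smooth with f'(1) = 0, f'(x) < 0 on (1,r₁), and suppose that the function -f''(x)/f(x) is decreasing on (1,r₁). Then for all x ∈ (1,r₁), the inequality f(x)·f'(x)² + f''(x)·(f(1)² - f(x)²) ≥ 0 holds. -/
theorem stmt_6 (f : ℝ → ℝ) (r₁ : EReal) (hr₁ : 1 < r₁)
    (hf : ContDiffOn ℝ (⊤ : ℕ∞) f (Set.Ici 1))
    (hpos : ∀ x ∈ Set.Ici (1 : ℝ), 0 < f x)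
    (hf'1 : deriv f 1 = 0)
    (hf' : ∀ x : ℝ, 1 < x → (x : EReal) < r₁ → deriv f x < 0)
    (hdec : AntitoneOn (fun x => -(deriv (deriv f) x) / f x)
      {x : ℝ | 1 < x ∧ (x : EReal) < r₁}) :
    ∀ x : ℝ, 1 < x → (x : EReal) < r₁ →
      0 ≤ f x * (deriv f x) ^ 2 + deriv (deriv f) x * ((f 1) ^ 2 - f x ^ 2) := by
  intro x hx1 hxr
  set F1 : ℝ → ℝ := derivWithin f (Set.Ici 1) with hF1def
  have hF1 : ContDiffOn ℝ (⊤ : ℕ∞) F1 (Set.Ici 1) :=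
    hf.derivWithin (uniqueDiffOn_Ici 1) (by simp)
  have hF1eq : ∀ t : ℝ, 1 < t → F1 t = deriv f t := fun t ht =>
    derivWithin_of_mem_nhds (Ici_mem_nhds ht)
  set gx : ℝ := -(deriv (deriv f) x) / f x with hgx
  set h : ℝ → ℝ := fun t => F1 t ^ 2 + gx * f t ^ 2 with hh
  have hfxpos : 0 < f x := hpos x (le_of_lt hx1)
  -- derivative facts at interior points
  have key : ∀ t ∈ Set.Ioo 1 x,
      HasDerivAt h (2 * deriv f t * (deriv (deriv f) t + gx * f t)) t := by
    intro t ht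
    have ht1 : (1:ℝ) < t := ht.1
    have hmem : Set.Ici (1:ℝ) ∈ nhds t := Ici_mem_nhds ht1
    have hfd : DifferentiableAt ℝ f t :=
      ((hf.differentiableOn (by simp)).differentiableAt hmem)
    have hft : HasDerivAt f (F1 t) t := by
      rw [hF1eq t ht1]; exact hfd.hasDerivAt
    have hF1d : DifferentiableAt ℝ F1 t :=
      ((hF1.differentiableOn (by simp)).differentiableAt hmem)
    have hev : F1 =ᶠ[nhds t] deriv f :=
      Filter.eventuallyEq_of_mem (Ioi_mem_nhds ht1) fun y hy =>
        derivWithin_of_mem_nhds (Ici_mem_nhds hy)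
    have hF1t : HasDerivAt F1 (deriv (deriv f) t) t := by
      have := hF1d.hasDerivAt
      rwa [hev.deriv_eq] at this
    have h1 : HasDerivAt (fun t => F1 t ^ 2) (2 * F1 t * deriv (deriv f) t) t := by
      have := hF1t.fun_pow 2
      simpa [mul_comm, mul_assoc, mul_left_comm] using this
    have h2 : HasDerivAt (fun t => gx * f t ^ 2) (gx * (2 * f t * F1 t)) t := by
      have := (hft.pow 2).const_mul gx
      simpa [mul_comm, mul_assoc, mul_left_comm] using this
    have := h1.add h2
    have heq : 2 * F1 t * deriv (deriv f) t + gx * (2 * f t * F1 t)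
        = 2 * deriv f t * (deriv (deriv f) t + gx * f t) := by
      rw [hF1eq t ht1]; ring
    rw [heq] at this
    exact this
  -- monotonicity of h on [1, x]
  have hmono : MonotoneOn h (Set.Icc 1 x) := by
    apply monotoneOn_of_deriv_nonneg (convex_Icc 1 x)
    · apply ContinuousOn.add
      · exact ((hF1.continuousOn.mono (Set.Icc_subset_Ici_self)).pow 2)
      · exact ((hf.continuousOn.mono (Set.Icc_subset_Ici_self)).pow 2).const_smul gx
    · rw [interior_Icc]
      exact fun t ht => ((key t ht).differentiableAt).differentiableWithinAt
    · rw [interior_Icc]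
      intro t ht
      rw [(key t ht).deriv]
      have ht1 := ht.1
      have htr : (t : EReal) < r₁ := lt_trans (EReal.coe_lt_coe_iff.mpr ht.2) hxr
      have hf't : deriv f t < 0 := hf' t ht1 htr
      have hftpos : 0 < f t := hpos t (le_of_lt ht1)
      have hanti : gx ≤ -(deriv (deriv f) t) / f t := by
        have := hdec (Set.mem_setOf.mpr ⟨ht1, htr⟩) (Set.mem_setOf.mpr ⟨hx1, hxr⟩)
          (le_of_lt ht.2)
        exact this
      have : deriv (deriv f) t + gx * f t ≤ 0 := by
        nlinarith [mul_le_mul_of_nonneg_right hanti (le_of_lt hftpos),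
          div_mul_cancel₀ (-(deriv (deriv f) t)) (ne_of_gt hftpos)]
      nlinarith
  have h1x : h 1 ≤ h x := hmono (Set.left_mem_Icc.mpr (le_of_lt hx1))
    (Set.right_mem_Icc.mpr (le_of_lt hx1)) (le_of_lt hx1)
  have hFx : F1 x = deriv f x := hF1eq x hx1
  have hgxfx : gx * f x = -(deriv (deriv f) x) :=
    div_mul_cancel₀ _ (ne_of_gt hfxpos)
  simp only [hh, hFx] at h1x
  nlinarith [sq_nonneg (F1 1), h1x, hfxpos, hgxfx]
end

section
/- Let f : [1,∞) → (0,∞) be smooth with f'(1) = 0, f' < 0 on (1,r₁), and suppose there exists r* ∈ (1,r₁) such that -f''(x)/f(x) is decreasing on (1,r*) and f''(x) ≥ 0 on [r*,r₁). Then f(x)·f'(x)² + f''(x)·(f(1)² - f(x)²) ≥ 0 holds for all x ∈ (1,r₁). -/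
theorem stmt_7 (f : ℝ → ℝ) (r₁ : EReal) (hr₁ : 1 < r₁)
    (hf : ContDiffOn ℝ (⊤ : ℕ∞) f (Set.Ici 1))
    (hpos : ∀ x ∈ Set.Ici (1 : ℝ), 0 < f x)
    (hf'1 : deriv f 1 = 0)
    (hf' : ∀ x : ℝ, 1 < x → (x : EReal) < r₁ → deriv f x < 0)
    (rs : ℝ) (hrs : 1 < rs ∧ (rs : EReal) < r₁)
    (hdec : AntitoneOn (fun x => -(deriv (deriv f) x) / f x) (Set.Ioo 1 rs))
    (hconv : ∀ x : ℝ, rs ≤ x → (x : EReal) < r₁ → 0 ≤ deriv (deriv f) x) :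
    ∀ x : ℝ, 1 < x → (x : EReal) < r₁ →
      0 ≤ f x * (deriv f x) ^ 2 + deriv (deriv f) x * ((f 1) ^ 2 - f x ^ 2) := by
  intro x hx1 hxr
  have hfx : 0 < f x := hpos x hx1.le
  have hf1 : 0 < f 1 := hpos 1 Set.self_mem_Ici
  have hcont : ContinuousOn f (Set.Ici 1) := hf.continuousOn
  have hmemN : ∀ t : ℝ, 1 < t → Set.Ici (1:ℝ) ∈ nhds t := fun t ht => Ici_mem_nhds ht
  have hdf : ∀ t : ℝ, 1 < t → DifferentiableAt ℝ f t := fun t ht =>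
    (hf.contDiffAt (hmemN t ht)).differentiableAt (by simp)
  have hOpen : ContDiffOn ℝ (⊤ : ℕ∞) (deriv f) (Set.Ioi 1) :=
    (hf.mono Set.Ioi_subset_Ici_self).deriv_of_isOpen isOpen_Ioi (by simp)
  have hdf2 : ∀ t : ℝ, 1 < t → DifferentiableAt ℝ (deriv f) t := fun t ht =>
    ((hOpen t ht).differentiableWithinAt (by simp)).differentiableAt (Ioi_mem_nhds ht)
  -- f is decreasing: f x ≤ f 1 for x ∈ (1, r₁)
  have hanti : ∀ y : ℝ, 1 < y → (y : EReal) < r₁ → f y ≤ f 1 := by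
    intro y hy hyr
    have h1 : AntitoneOn f (Set.Icc 1 y) := by
      apply antitoneOn_of_deriv_nonpos (convex_Icc 1 y)
        (hcont.mono Set.Icc_subset_Ici_self)
      · intro t ht
        rw [interior_Icc] at ht
        exact (hdf t ht.1).differentiableWithinAt
      · intro t ht
        rw [interior_Icc] at ht
        exact (hf' t ht.1 (lt_trans (EReal.coe_lt_coe_iff.mpr ht.2) hyr)).le
    exact h1 (Set.left_mem_Icc.mpr hy.le) (Set.right_mem_Icc.mpr hy.le) hy.le
  have hle := hanti x hx1 hxr
  rcases le_or_gt rs x with hge | hlt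
  · -- convex region: f'' x ≥ 0 and f 1 ≥ f x > 0
    have h2 := hconv x hge hxr
    have h3 : 0 ≤ (f 1)^2 - (f x)^2 := by nlinarith
    nlinarith [mul_nonneg hfx.le (sq_nonneg (deriv f x)), mul_nonneg h2 h3]
  · -- region (1, rs)
    set g := derivWithin f (Set.Ici 1) with hg
    have hgcont : ContinuousOn g (Set.Ici 1) :=
      hf.continuousOn_derivWithin (uniqueDiffOn_Ici 1) (by simp)
    have hgeq : ∀ t : ℝ, 1 < t → g t = deriv f t := fun t ht =>
      derivWithin_of_mem_nhds (hmemN t ht)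
    set c := -(deriv (deriv f) x) / f x with hc
    have hdd : ∀ t ∈ Set.Ioo (1:ℝ) x, deriv (deriv f) t + c * f t ≤ 0 := by
      intro t ht
      have htmem : t ∈ Set.Ioo 1 rs := ⟨ht.1, lt_trans ht.2 hlt⟩
      have hxmem : x ∈ Set.Ioo 1 rs := ⟨hx1, hlt⟩
      have hft : 0 < f t := hpos t ht.1.le
      have h1 : c ≤ -(deriv (deriv f) t) / f t := hdec htmem hxmem ht.2.le
      have h2 : c * f t ≤ -(deriv (deriv f) t) := (le_div_iff₀ hft).mp h1
      linarith
    have hHas : ∀ t ∈ Set.Ioo (1:ℝ) x, HasDerivAt (fun t => g t ^ 2 + c * f t ^ 2)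
        (2 * deriv f t * (deriv (deriv f) t + c * f t)) t := by
      intro t ht
      have h1 : HasDerivAt f (deriv f t) t := (hdf t ht.1).hasDerivAt
      have h2 : HasDerivAt (deriv f) (deriv (deriv f) t) t := (hdf2 t ht.1).hasDerivAt
      have h3 : HasDerivAt (fun t => deriv f t ^ 2 + c * f t ^ 2)
          (2 * deriv f t * (deriv (deriv f) t + c * f t)) t := by
        have := ((h2.pow 2).add ((h1.pow 2).const_mul c) :
          HasDerivAt (fun t => deriv f t ^ 2 + c * f t ^ 2) _ t)
        refine this.congr_deriv ?_
        push_cast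
        ring
      apply h3.congr_of_eventuallyEq
      filter_upwards [Ioi_mem_nhds ht.1] with y hy
      rw [hgeq y hy]
    have hmono : MonotoneOn (fun t => g t ^ 2 + c * f t ^ 2) (Set.Icc 1 x) := by
      apply monotoneOn_of_deriv_nonneg (convex_Icc 1 x)
      · exact ((hgcont.mono Set.Icc_subset_Ici_self).pow 2).add
          (continuousOn_const.mul ((hcont.mono Set.Icc_subset_Ici_self).pow 2))
      · intro t ht
        rw [interior_Icc] at ht
        exact (hHas t ht).differentiableAt.differentiableWithinAt
      · intro t ht
        rw [interior_Icc] at ht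
        rw [(hHas t ht).deriv]
        have hneg := hf' t ht.1 (lt_trans (EReal.coe_lt_coe_iff.mpr ht.2) hxr)
        nlinarith [mul_nonneg (neg_nonneg.mpr hneg.le) (neg_nonneg.mpr (hdd t ht))]
    have hmx : g 1 ^ 2 + c * f 1 ^ 2 ≤ g x ^ 2 + c * f x ^ 2 :=
      hmono (Set.left_mem_Icc.mpr hx1.le) (Set.right_mem_Icc.mpr hx1.le) hx1.le
    rw [hgeq x hx1] at hmx
    have key : c * f 1 ^ 2 ≤ deriv f x ^ 2 + c * f x ^ 2 := by
      nlinarith [sq_nonneg (g 1)]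
    have hddx : deriv (deriv f) x = -c * f x := by
      rw [hc]; field_simp
    rw [hddx]
    nlinarith [mul_nonneg hfx.le (show 0 ≤ deriv f x ^ 2 - c * (f 1 ^ 2 - f x ^ 2) by nlinarith [key])]
end

section
/- Let f : [0,∞) → ℝ be smooth with f(0) = 0, f'(x) > 0 on [0,1), f'(1) = 0, f''(1) < 0, and f'(x) < 0 on (1,r₁) for some r₁ > 1. Let ξ denote the inverse of f restricted to [0,1]. Then the one-sided limit of (ξ∘f)'(x) as x decreases to 1 equals -1. -/
open Set Filter Topology

set_option maxHeartbeats 4000000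

lemma stmt8_aux (f f' : ℝ → ℝ) (a b c : ℝ) (hab : a ≤ b)
    (hcont : ContinuousOn f (Set.Icc a b))
    (hder : ∀ t ∈ Set.Ioo a b, HasDerivAt f (f' t) t)
    (hbound : ∀ t ∈ Set.Ioo a b, f' t ≤ c * (t - 1)) :
    f b - f a ≤ c * ((b - 1) ^ 2 - (a - 1) ^ 2) / 2 := by
  have hF : ∀ t ∈ Set.Ioo a b,
      HasDerivAt (fun t => f t - c * (t - 1) ^ 2 / 2) (f' t - c * (t - 1)) t := by
    intro t ht
    have h1 : HasDerivAt (fun t : ℝ => (t - 1)) 1 t := (hasDerivAt_id t).sub_const 1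
    have h2 := ((h1.pow 2).const_mul c).div_const 2
    have h3 : HasDerivAt (fun t : ℝ => c * (t - 1) ^ 2 / 2) (c * (t - 1)) t := by
      exact h2.congr_deriv (by norm_num; ring)
    exact (hder t ht).sub h3
  have hA : AntitoneOn (fun t => f t - c * (t - 1) ^ 2 / 2) (Set.Icc a b) := by
    apply antitoneOn_of_deriv_nonpos (convex_Icc a b)
    · exact hcont.sub (Continuous.continuousOn (by continuity))
    · intro t ht; rw [interior_Icc] at ht
      exact ((hF t ht).differentiableAt).differentiableWithinAt
    · intro t ht; rw [interior_Icc] at ht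
      rw [(hF t ht).deriv]
      linarith [hbound t ht]
  have h := hA (Set.left_mem_Icc.mpr hab) (Set.right_mem_Icc.mpr hab) hab
  simp only at h
  linarith

theorem stmt_8 (f ξ : ℝ → ℝ) (r₁ : ℝ) (hr₁ : 1 < r₁)
    (hf : ContDiffOn ℝ (⊤ : ℕ∞) f (Set.Ici 0))
    (hf0 : f 0 = 0)
    (hf'pos : ∀ x ∈ Set.Ico (0 : ℝ) 1, 0 < deriv f x)
    (hf'1 : deriv f 1 = 0)
    (hf''1 : deriv (deriv f) 1 < 0)
    (hf'neg : ∀ x ∈ Set.Ioo 1 r₁, deriv f x < 0)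
    (hξ₁ : ∀ x ∈ Set.Icc (0 : ℝ) 1, ξ (f x) = x)
    (hξ₂ : ∀ y ∈ Set.Icc 0 (f 1), ξ y ∈ Set.Icc (0 : ℝ) 1 ∧ f (ξ y) = y) :
    Filter.Tendsto (fun x => deriv (ξ ∘ f) x)
      (nhdsWithin 1 (Set.Ioi 1)) (nhds (-1)) := by
  have hfc : ContinuousOn f (Set.Ici 0) := hf.continuousOn
  have hS : StrictMonoOn f (Set.Icc 0 1) := by
    apply strictMonoOn_of_deriv_pos (convex_Icc 0 1) (hfc.mono Set.Icc_subset_Ici_self)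
    intro x hx
    rw [interior_Icc] at hx
    exact hf'pos x ⟨hx.1.le, hx.2⟩
  have hmem0 : (0:ℝ) ∈ Set.Icc (0:ℝ) 1 := by norm_num
  have hmem1 : (1:ℝ) ∈ Set.Icc (0:ℝ) 1 := by norm_num
  have hf1pos : 0 < f 1 := by
    have := hS hmem0 hmem1 one_pos
    linarith
  -- squeeze lemma for ξ
  have hL : ∀ a b y : ℝ, a ∈ Set.Icc (0:ℝ) 1 → b ∈ Set.Icc (0:ℝ) 1 → f a < y → y < f b →
      ξ y ∈ Set.Ioo a b := by
    intro a b y ha hb hay hyb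
    have h0a : f 0 ≤ f a := hS.monotoneOn hmem0 ha ha.1
    have hb1 : f b ≤ f 1 := hS.monotoneOn hb hmem1 hb.2
    obtain ⟨hξy, hfξy⟩ := hξ₂ y ⟨by linarith, by linarith⟩
    constructor
    · by_contra h
      push_neg at h
      have := hS.monotoneOn hξy ha h
      rw [hfξy] at this; linarith
    · by_contra h
      push_neg at h
      have := hS.monotoneOn hb hξy h
      rw [hfξy] at this; linarith
  set g : ℝ → ℝ := fun x => ξ (f x) with hgdef
  set l := nhdsWithin (1:ℝ) (Set.Ioi 1) with hldef
  have hfC : ContDiffOn ℝ (⊤ : ℕ∞) f (Set.Ioi 0) := hf.mono Set.Ioi_subset_Ici_self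
  have hdf : ∀ x : ℝ, 0 < x → HasDerivAt f (deriv f x) x := by
    intro x hx
    have h1 : ContDiffAt ℝ (⊤ : ℕ∞) f x := (hfC x hx).contDiffAt (isOpen_Ioi.mem_nhds hx)
    exact (h1.differentiableAt (by simp)).hasDerivAt
  have hf'C : ContDiffOn ℝ (⊤ : ℕ∞) (deriv f) (Set.Ioi 0) := hfC.deriv_of_isOpen isOpen_Ioi (by simp)
  have hdf' : HasDerivAt (deriv f) (deriv (deriv f) 1) 1 := by
    have h1 : ContDiffAt ℝ (⊤ : ℕ∞) (deriv f) 1 := (hf'C 1 (Set.mem_Ioi.mpr one_pos)).contDiffAt (isOpen_Ioi.mem_nhds (Set.mem_Ioi.mpr one_pos))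
    exact (h1.differentiableAt (by simp)).hasDerivAt
  set A := deriv (deriv f) 1 with hAdef
  have T1 : Tendsto (fun t => deriv f t / (t - 1)) (nhdsWithin (1:ℝ) {(1:ℝ)}ᶜ) (nhds A) := by
    have h := hasDerivAt_iff_tendsto_slope.mp hdf'
    apply h.congr
    intro t
    rw [slope_def_field, hf'1, sub_zero]
  have hfc1 : Tendsto f l (nhds (f 1)) :=
    ((hdf 1 one_pos).continuousAt.tendsto).mono_left nhdsWithin_le_nhds
  have E1 : ∀ᶠ x in l, x ∈ Set.Ioo 1 r₁ :=
    Ioo_mem_nhdsGT_of_mem ⟨le_rfl, hr₁⟩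
  have hfxlt : ∀ x ∈ Set.Ioo 1 r₁, f x < f 1 := by
    intro x hx
    have hanti : StrictAntiOn f (Set.Icc 1 x) := by
      apply strictAntiOn_of_deriv_neg (convex_Icc 1 x)
      · exact hfc.mono (fun t ht => le_trans zero_le_one ht.1)
      · intro t ht; rw [interior_Icc] at ht
        exact hf'neg t ⟨ht.1, lt_trans ht.2 hx.2⟩
    exact hanti ⟨le_rfl, hx.1.le⟩ ⟨hx.1.le, le_rfl⟩ hx.1
  have E2 : ∀ᶠ x in l, f x ∈ Set.Ioo 0 (f 1) := by
    have h1 : ∀ᶠ x in l, 0 < f x := hfc1.eventually (eventually_gt_nhds hf1pos)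
    filter_upwards [h1, E1] with x h1x h2x
    exact ⟨h1x, hfxlt x h2x⟩
  have Eg : ∀ᶠ x in l, g x ∈ Set.Ioo 0 1 ∧ f (g x) = f x := by
    filter_upwards [E2] with x hx
    refine ⟨hL 0 1 (f x) hmem0 hmem1 (by rw [hf0]; exact hx.1) hx.2,
      (hξ₂ (f x) ⟨hx.1.le, hx.2.le⟩).2⟩
  have hgt : Tendsto g l (nhds 1) := by
    rw [tendsto_order]
    constructor
    · intro c hc
      rcases lt_or_ge c 0 with h | h
      · filter_upwards [Eg] with x hx; linarith [hx.1.1]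
      · have hfcf1 : f c < f 1 := hS ⟨h, hc.le⟩ hmem1 hc
        have h2 : ∀ᶠ x in l, f c < f x := hfc1.eventually (eventually_gt_nhds hfcf1)
        filter_upwards [h2, E2] with x h2x hx
        exact (hL c 1 (f x) ⟨h, hc.le⟩ hmem1 h2x hx.2).1
    · intro c hc
      filter_upwards [Eg] with x hx; linarith [hx.1.2]
  have hgt' : Tendsto g l (nhdsWithin (1:ℝ) {(1:ℝ)}ᶜ) := by
    rw [tendsto_nhdsWithin_iff]
    refine ⟨hgt, ?_⟩
    filter_upwards [Eg] with x hx
    exact Set.mem_compl_singleton_iff.mpr (ne_of_lt hx.1.2)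
  have T2 : Tendsto (fun x => deriv f x / (x - 1)) l (nhds A) :=
    T1.mono_left (nhdsWithin_mono 1 (fun x hx => Set.mem_compl_singleton_iff.mpr (ne_of_gt hx)))
  have T3 : Tendsto (fun x => deriv f (g x) / (g x - 1)) l (nhds A) := T1.comp hgt'
  -- continuity of ξ on (0, f 1)
  have hξcont : ∀ y ∈ Set.Ioo 0 (f 1), ContinuousAt ξ y := by
    intro y hy
    obtain ⟨hξy, hfξy⟩ := hξ₂ y ⟨hy.1.le, hy.2.le⟩
    have hb : ξ y ∈ Set.Ioo (0:ℝ) 1 := hL 0 1 y hmem0 hmem1 (by rw [hf0]; exact hy.1) hy.2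
    have hevIoo : ∀ᶠ y' in nhds y, y' ∈ Set.Ioo 0 (f 1) := isOpen_Ioo.eventually_mem hy
    unfold ContinuousAt
    rw [tendsto_order]
    constructor
    · intro c hc
      rcases lt_or_ge c 0 with h | h
      · filter_upwards [hevIoo] with y' hy'
        have := (hξ₂ y' ⟨hy'.1.le, hy'.2.le⟩).1
        linarith [this.1]
      · have hc1 : c < 1 := lt_trans hc hb.2
        have hfcy : f c < y := by
          have := hS ⟨h, hc1.le⟩ ⟨hb.1.le, hb.2.le⟩ hc
          rwa [hfξy] at this
        have hev2 : ∀ᶠ y' in nhds y, y' ∈ Set.Ioo (f c) (f 1) :=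
          isOpen_Ioo.eventually_mem ⟨hfcy, hy.2⟩
        filter_upwards [hev2] with y' hy'
        exact (hL c 1 y' ⟨h, hc1.le⟩ hmem1 hy'.1 hy'.2).1
    · intro c hc
      rcases le_or_gt c 1 with h | h
      · have hc0 : 0 < c := lt_trans hb.1 hc
        have hyfc : y < f c := by
          have := hS ⟨hb.1.le, hb.2.le⟩ ⟨hc0.le, h⟩ hc
          rwa [hfξy] at this
        have hev2 : ∀ᶠ y' in nhds y, y' ∈ Set.Ioo 0 (f c) :=
          isOpen_Ioo.eventually_mem ⟨hy.1, hyfc⟩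
        filter_upwards [hev2] with y' hy'
        exact (hL 0 c y' hmem0 ⟨hc0.le, h⟩ (by rw [hf0]; exact hy'.1) hy'.2).2
      · filter_upwards [hevIoo] with y' hy'
        have := (hξ₂ y' ⟨hy'.1.le, hy'.2.le⟩).1
        linarith [this.2]
  -- derivative formula
  have hder : ∀ᶠ x in l, deriv (ξ ∘ f) x = (deriv f (g x))⁻¹ * deriv f x := by
    filter_upwards [E1, E2, Eg] with x hx1 hx2 hx3
    obtain ⟨hgx, hfgx⟩ := hx3
    have hgd : HasDerivAt f (deriv f (g x)) (g x) := hdf _ hgx.1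
    have hgne : deriv f (g x) ≠ 0 := ne_of_gt (hf'pos _ ⟨hgx.1.le, hgx.2⟩)
    have hcontξ : ContinuousAt ξ (f x) := hξcont _ hx2
    have hfg : ∀ᶠ y in nhds (f x), f (ξ y) = y := by
      filter_upwards [isOpen_Ioo.eventually_mem hx2] with y' hy'
      exact (hξ₂ y' ⟨hy'.1.le, hy'.2.le⟩).2
    have hξd : HasDerivAt ξ (deriv f (g x))⁻¹ (f x) :=
      HasDerivAt.of_local_left_inverse hcontξ hgd hgne hfg
    have hfd : HasDerivAt f (deriv f x) x := hdf x (by linarith [hx1.1])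
    exact (hξd.comp x hfd).deriv
  -- key ratio limit
  have hR : Tendsto (fun x => (g x - 1) / (x - 1)) l (nhds (-1)) := by
    rw [Metric.tendsto_nhds]
    intro ε hε
    set ε' := min ε 1 / 2 with hε'def
    have hε'pos : 0 < ε' := by
      have : 0 < min ε 1 := lt_min hε one_pos
      positivity
    have hε'le : ε' ≤ 1 / 2 := by
      have : min ε 1 ≤ 1 := min_le_right _ _
      rw [hε'def]; linarith
    have hε'ltε : ε' < ε := by
      have h1 : min ε 1 ≤ ε := min_le_left _ _
      rw [hε'def]; linarith
    set η := -A * ε' / 4 with hηdef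
    have hηpos : 0 < η := by
      have : 0 < -A := by linarith
      positivity
    obtain ⟨δ, hδpos, hδ⟩ := Metric.tendsto_nhdsWithin_nhds.mp T1 η hηpos
    set δ' := min δ 1 with hδ'def
    have hδ'pos : 0 < δ' := lt_min hδpos one_pos
    have hδ'le : δ' ≤ δ := min_le_left _ _
    have hslope : ∀ t : ℝ, t ≠ 1 → |t - 1| < δ' → |deriv f t / (t - 1) - A| < η := by
      intro t ht hdist
      have := hδ (Set.mem_compl_singleton_iff.mpr ht) (by rw [Real.dist_eq]; linarith)
      rwa [Real.dist_eq] at this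
    have hevx : ∀ᶠ x in l, x ∈ Set.Ioo 1 (1 + δ') :=
      Ioo_mem_nhdsGT_of_mem ⟨le_rfl, by linarith⟩
    have hevg : ∀ᶠ x in l, g x ∈ Set.Ioo (1 - δ') 1 := by
      have h1 : ∀ᶠ x in l, 1 - δ' < g x := hgt.eventually (eventually_gt_nhds (by linarith))
      filter_upwards [h1, Eg] with x h1x hx
      exact ⟨h1x, hx.1.2⟩
    filter_upwards [hevx, hevg, Eg] with x hx hgx hx3
    obtain ⟨hg01, hfgx⟩ := hx3
    have hu : 0 < x - 1 := by linarith [hx.1]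
    have hw : g x - 1 < 0 := by linarith [hgx.2]
    -- upper/lower slope bounds on intervals
    have hb1 : f x - f 1 ≤ (A + η) * ((x - 1) ^ 2 - ((1:ℝ) - 1) ^ 2) / 2 := by
      apply stmt8_aux f (deriv f) 1 x (A + η) (by linarith)
      · exact hfc.mono (fun t ht => le_trans zero_le_one ht.1)
      · exact fun t ht => hdf t (by linarith [ht.1])
      · intro t ht
        have ht1 : 0 < t - 1 := by linarith [ht.1]
        have hs := hslope t (by linarith [ht.1]) (by rw [abs_of_pos ht1]; linarith [ht.2, hx.2])
        have h2 : deriv f t / (t - 1) < A + η := by linarith [(abs_lt.mp hs).2]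
        rw [div_lt_iff₀ ht1] at h2
        linarith
    have hb2 : (A - η) * ((x - 1) ^ 2 - ((1:ℝ) - 1) ^ 2) / 2 ≤ f x - f 1 := by
      have := stmt8_aux (fun t => -f t) (fun t => -deriv f t) 1 x (-(A - η)) (by linarith)
        ((hfc.mono (fun t ht => le_trans zero_le_one ht.1)).neg)
        (fun t ht => (hdf t (by linarith [ht.1])).neg)
        ?_
      · linarith [this]
      · intro t ht
        have ht1 : 0 < t - 1 := by linarith [ht.1]
        have hs := hslope t (by linarith [ht.1]) (by rw [abs_of_pos ht1]; linarith [ht.2, hx.2])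
        have h2 : A - η < deriv f t / (t - 1) := by linarith [(abs_lt.mp hs).1]
        rw [lt_div_iff₀ ht1] at h2
        show -deriv f t ≤ -(A - η) * (t - 1)
        linarith
    have hb3 : f (g x) - f 1 ≤ (A + η) * ((g x - 1) ^ 2) / 2 := by
      have := stmt8_aux (fun t => -f t) (fun t => -deriv f t) (g x) 1 (-(A + η)) (by linarith)
        ((hfc.mono (fun t ht => le_trans hg01.1.le ht.1)).neg)
        (fun t ht => (hdf t (by linarith [hg01.1, ht.1])).neg)
        ?_
      · nlinarith [this]
      · intro t ht
        have ht1 : t - 1 < 0 := by linarith [ht.2]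
        have hs := hslope t (by linarith [ht.2]) (by rw [abs_of_neg ht1]; linarith [ht.1, hgx.1])
        have h2 : deriv f t / (t - 1) < A + η := by linarith [(abs_lt.mp hs).2]
        rw [div_lt_iff_of_neg ht1] at h2
        show -deriv f t ≤ -(A + η) * (t - 1)
        linarith
    have hb4 : (A - η) * ((g x - 1) ^ 2) / 2 ≤ f (g x) - f 1 := by
      have := stmt8_aux f (deriv f) (g x) 1 (A - η) (by linarith)
        (hfc.mono (fun t ht => le_trans hg01.1.le ht.1))
        (fun t ht => hdf t (by linarith [hg01.1, ht.1]))
        ?_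
      · nlinarith [this]
      · intro t ht
        have ht1 : t - 1 < 0 := by linarith [ht.2]
        have hs := hslope t (by linarith [ht.2]) (by rw [abs_of_neg ht1]; linarith [ht.1, hgx.1])
        have h2 : A - η < deriv f t / (t - 1) := by linarith [(abs_lt.mp hs).1]
        rw [lt_div_iff_of_neg ht1] at h2
        linarith
    -- combine
    set u := x - 1 with hudef
    set w := g x - 1 with hwdef
    rw [hfgx] at hb3 hb4
    rw [hηdef] at hb1 hb2 hb3 hb4
    have hkey1 : 0 ≤ A * ((1 - ε' / 4) * w ^ 2 - (1 + ε' / 4) * u ^ 2) := by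
      linarith [hb2, hb3]
    have hkey2 : 0 ≤ A * ((1 - ε' / 4) * u ^ 2 - (1 + ε' / 4) * w ^ 2) := by
      linarith [hb1, hb4]
    have hkey1' : (1 - ε' / 4) * w ^ 2 ≤ (1 + ε' / 4) * u ^ 2 := by
      nlinarith [hkey1, hf''1]
    have hkey2' : (1 - ε' / 4) * u ^ 2 ≤ (1 + ε' / 4) * w ^ 2 := by
      nlinarith [hkey2, hf''1]
    have h14 : (0:ℝ) < 1 - ε' / 4 := by linarith
    have h14' : (0:ℝ) < 1 + ε' / 4 := by linarith
    have c1 : 0 ≤ u ^ 2 * (3 * ε' / 2 + ε' ^ 2 / 2 - ε' ^ 3 / 4) :=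
      mul_nonneg (sq_nonneg u) (by nlinarith [hε'pos, hε'le])
    have c2 : 0 ≤ u ^ 2 * (3 * ε' / 2 - ε' ^ 2 / 2 - ε' ^ 3 / 4) :=
      mul_nonneg (sq_nonneg u) (by nlinarith [hε'pos, hε'le])
    have hstep1 : (1 - ε' / 4) * w ^ 2 ≤ (1 - ε' / 4) * ((1 + ε') ^ 2 * u ^ 2) := by
      nlinarith [hkey1', c1]
    have hsq1 : w ^ 2 ≤ (1 + ε') ^ 2 * u ^ 2 := (mul_le_mul_iff_right₀ h14).mp hstep1
    have hstep2 : (1 + ε' / 4) * ((1 - ε') ^ 2 * u ^ 2) ≤ (1 + ε' / 4) * w ^ 2 := by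
      nlinarith [hkey2', c2]
    have hsq2 : (1 - ε') ^ 2 * u ^ 2 ≤ w ^ 2 := (mul_le_mul_iff_right₀ h14').mp hstep2
    have hspos : 0 < (1 + ε') * u := by nlinarith [hu, hε'pos]
    have hsw : 0 < (1 + ε') * u - w := by linarith
    have hwu1 : -(1 + ε') * u ≤ w := by nlinarith [hsq1, hsw]
    have htpos : 0 ≤ (1 - ε') * u := by nlinarith [hu, hε'le]
    have htw : 0 < (1 - ε') * u - w := by linarith
    have hwu2 : w ≤ -((1 - ε') * u) := by nlinarith [hsq2, htw]
    rw [Real.dist_eq]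
    have hrw : w / u - (-1) = (w + u) / u := by
      field_simp
      ring
    have hεu : ε' * u < ε * u := mul_lt_mul_of_pos_right hε'ltε hu
    rw [hrw, abs_div, abs_of_pos hu, div_lt_iff₀ hu, abs_lt]
    constructor
    · linarith [hεu, hwu1]
    · linarith [hεu, hwu2]
  -- final assembly
  have h3 : Tendsto (fun x => ((g x - 1) / (x - 1))⁻¹) l (nhds ((-1 : ℝ))⁻¹) :=
    hR.inv₀ (by norm_num)
  have h4 : Tendsto (fun x => (deriv f (g x) / (g x - 1))⁻¹) l (nhds A⁻¹) :=
    T3.inv₀ (ne_of_lt hf''1)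
  have h5 : Tendsto
      (fun x => (deriv f (g x) / (g x - 1))⁻¹ * (deriv f x / (x - 1)) * ((g x - 1) / (x - 1))⁻¹)
      l (nhds (A⁻¹ * A * ((-1 : ℝ))⁻¹)) := (h4.mul T2).mul h3
  have hval : A⁻¹ * A * ((-1 : ℝ))⁻¹ = -1 := by
    rw [inv_mul_cancel₀ (ne_of_lt hf''1)]; norm_num
  rw [hval] at h5
  refine Tendsto.congr' ?_ h5
  filter_upwards [hder, E1, Eg] with x hd hx1 hx3
  obtain ⟨hg01, _⟩ := hx3
  have hune : x - 1 ≠ 0 := by have := hx1.1; intro h; linarith [sub_eq_zero.mp h]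
  have hwne : g x - 1 ≠ 0 := by have := hg01.2; intro h; linarith [sub_eq_zero.mp h]
  have hfne : deriv f (g x) ≠ 0 := ne_of_gt (hf'pos _ ⟨hg01.1.le, hg01.2⟩)
  rw [hd]
  field_simp
end
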